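/- If the confidence radius is C(n) = √(2 v ln(1/δ)/n) + 3 ln(1/δ)/(n−1) for n ≥ 2 pulls, variance proxy v ∈ [0,1/4], and the gap condition Δ ≤ 2C(n) holds, then n ≤ 1 + (8v·(2/Δ)² + 12·(2/Δ))·ln(1/δ). In particular n = O(ln(1/δ)/Δ²). -/
import Mathlib


/-- If the confidence radius is
`C(n) = √(2 v ln(1/δ)/n) + 3 ln(1/δ)/(n−1)` with `n ≥ 2` and `v ∈ [0,1/4]`, and
the gap condition `Δ ≤ 2 C(n)` holds, then
`n ≤ 1 + (8 v (2/Δ)² + 12 (2/Δ)) ln(1/δ)`. -/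
theorem ucb_pull_count_bound
    (Δ δ v : ℝ) (n : ℕ)
    (hΔ : 0 < Δ) (hδ : δ ∈ Set.Ioo (0 : ℝ) 1)
    (hn : 2 ≤ n) (hv : v ∈ Set.Icc (0 : ℝ) (1 / 4))
    (hgap : Δ ≤ 2 * (Real.sqrt (2 * v * Real.log (1 / δ) / n)
        + 3 * Real.log (1 / δ) / ((n : ℝ) - 1))) :
    (n : ℝ) ≤ 1 + (8 * v * (2 / Δ) ^ 2 + 12 * (2 / Δ)) * Real.log (1 / δ) := by
  obtain ⟨hδ0, hδ1⟩ := hδ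
  obtain ⟨hv0, hv1⟩ := hv
  set L := Real.log (1 / δ) with hLdef
  have hL : 0 < L := Real.log_pos ((one_lt_div hδ0).mpr hδ1)
  have hm : (1 : ℝ) ≤ (n : ℝ) - 1 := by
    have : (2 : ℝ) ≤ (n : ℝ) := by exact_mod_cast hn
    linarith
  set m : ℝ := (n : ℝ) - 1 with hmdef
  have hm0 : 0 < m := by linarith
  have hnm : m ≤ (n : ℝ) := by linarith
  have hnpos : (0 : ℝ) < n := by linarith
  have hnum : 0 ≤ 2 * v * L := by positivity
  have hsqle : Real.sqrt (2 * v * L / n) ≤ Real.sqrt (2 * v * L / m) :=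
    Real.sqrt_le_sqrt (div_le_div_of_nonneg_left hnum hm0 hnm)
  clear_value L m
  set a := Real.sqrt (2 * v * L / m) with hadef
  have ha0 : 0 ≤ a := Real.sqrt_nonneg _
  have ha2 : a ^ 2 = 2 * v * L / m := Real.sq_sqrt (by positivity)
  have key : Δ ≤ 2 * a + 6 * L / m := by
    have h := hgap
    have e : 6 * L / m = 2 * (3 * L / m) := by ring
    rw [e]
    linarith [hsqle]
  -- case split
  rcases le_or_gt (2 * a) (Δ / 2) with hc | hc
  · -- then 6L/m ≥ Δ/2, so m ≤ 12L/Δ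
    have h1 : Δ / 2 ≤ 6 * L / m := by linarith
    have h2 : m * Δ ≤ 12 * L := by
      have := (div_le_div_iff₀ (by norm_num : (0:ℝ) < 2) hm0).mp h1
      linarith
    have hgoal : m ≤ (8 * v * (2 / Δ) ^ 2 + 12 * (2 / Δ)) * L := by
      have hΔ2 : 0 < Δ ^ 2 := by positivity
      rw [div_pow]
      have hvL : 0 ≤ 8 * v * (2 ^ 2 / Δ ^ 2) * L := by positivity
      have h3 : m ≤ 12 * (2 / Δ) * L := by
        rw [← le_div_iff₀ hΔ] at h2
        calc m ≤ 12 * L / Δ := h2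
        _ = 12 * (2 / Δ) * L / 2 := by ring
        _ ≤ 12 * (2 / Δ) * L := by
            have : 0 ≤ 12 * (2 / Δ) * L := by positivity
            linarith
      linarith
    linarith
  · -- a > Δ/4, so 2vL/m ≥ Δ²/16, m ≤ 32 v L / Δ²
    have h1 : Δ / 4 < a := by linarith
    have h2 : Δ ^ 2 / 16 < a ^ 2 := by nlinarith
    rw [ha2] at h2
    have h3 : m * (Δ ^ 2 / 16) < 2 * v * L := by
      have := (div_lt_div_iff₀ (by norm_num : (0:ℝ) < 16) hm0).mp h2
      nlinarith
    have hgoal : m ≤ (8 * v * (2 / Δ) ^ 2 + 12 * (2 / Δ)) * L := by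
      have h12 : 0 ≤ 12 * (2 / Δ) * L := by positivity
      have h4 : m ≤ 8 * v * (2 / Δ) ^ 2 * L := by
        rw [div_pow]
        have hΔ2 : 0 < Δ ^ 2 := by positivity
        rw [show (8 : ℝ) * v * (2 ^ 2 / Δ ^ 2) * L = 32 * v * L / Δ ^ 2 by ring,
          le_div_iff₀ hΔ2]
        nlinarith
      linarith
    linarith
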